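/- Let n ≥ 2 and 2 ≤ k ≤ n with (n,k) ≠ (3,2) and (n,k) ≠ (4,3), and let C ⊆ S_n be the conjugacy class of k-cycles (cycle type (k,1^{n−k})). Then Cellini's cyclic descent map on C is not closed under cyclic rotation: it is NOT the case that for every π ∈ C there exists π' ∈ C with CDes(π') = sh(CDes(π)). -/

import Mathlib

open Finset

/-- One-line notation value of a permutation at (1-indexed) position `i`:
`oneline π i = π_i` (as a number in `{1,…,n}`), and `0` if `i` is out of range. -/
def oneline {n : ℕ} (π : Equiv.Perm (Fin n)) (i : ℕ) : ℕ :=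
  if h : i - 1 < n then (π ⟨i - 1, h⟩ : ℕ) + 1 else 0

/-- Cellini's cyclic descent set `CDes(π) = {i ∈ [n] : π_i > π_{i+1}}`,
with the convention `π_{n+1} := π_1`. -/
def CDes {n : ℕ} (π : Equiv.Perm (Fin n)) : Finset ℕ :=
  (Finset.Icc 1 n).filter fun i => oneline π (i % n + 1) < oneline π i

/-- The cyclic shift map on subsets of `[n]`, induced by `i ↦ i + 1 (mod n)`. -/
def sh (n : ℕ) (S : Finset ℕ) : Finset ℕ := S.image fun i => i % n + 1

/-- The cycle type of a permutation, including fixed points as parts equal to `1`;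
a multiset of parts summing to `n`. -/
def fullCycleType {n : ℕ} (π : Equiv.Perm (Fin n)) : Multiset ℕ :=
  π.cycleType + Multiset.replicate (n - π.support.card) 1

/-!
For each `k` we exhibit a `k`-cycle `π` such that no `k`-cycle has cyclic descent set
`sh (CDes π)`; the point is that a prescribed cyclic descent set pins the one-line notation
down almost completely.

* `k = n`: the rotation `[2, 3, …, n, 1]` has `CDes = {n - 1}`, and the only permutation with
  cyclic descent set `{n}` is the identity.
* `k ≤ n - 2`: the cycle `[k, 1, 2, …, k - 1, k + 1, …, n]` has `CDes = {1, n}`. A permutation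
  with cyclic descent set `{1, 2}` is `[n, v, 1, 2, …]` with increasing tail, so it has at most
  one fixed point, whereas a `k`-cycle has `n - k ≥ 2`.
* `k = n - 1 ≥ 4`: `zigzagCycle n` has `CDes = {3, …, n}`. A permutation with cyclic descent
  set `{1, 4, …, n}` starts with `2, 1` or `3, 1, 2`, so `1` lies on a cycle of length `2` or
  `3`, which an `(n - 1)`-cycle cannot contain.
-/

open Equiv Equiv.Perm

theorem Nat.add_sub_le_of_lt_succ {f : ℕ → ℕ} {a b : ℕ} (hab : a ≤ b)
    (h : ∀ i, a ≤ i → i < b → f i < f (i + 1)) : f a + (b - a) ≤ f b := by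
  induction b, hab using Nat.le_induction with
  | base => simp
  | succ b hab ih =>
    have := h b hab (by omega)
    have := ih fun i hi hib => h i hi (by omega)
    omega

theorem Nat.add_sub_le_of_succ_lt {f : ℕ → ℕ} {a b : ℕ} (hab : a ≤ b)
    (h : ∀ i, a ≤ i → i < b → f (i + 1) < f i) : f b + (b - a) ≤ f a := by
  induction b, hab using Nat.le_induction with
  | base => simp
  | succ b hab ih =>
    have := h b hab (by omega)
    have := ih fun i hi hib => h i hi (by omega)
    omega

theorem Equiv.Perm.IsCycle.card_support_dvd {α : Type*} [Fintype α] [DecidableEq α]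
    {f : Perm α} (hf : f.IsCycle) {x : α} (hx : f x ≠ x) {m : ℕ} (hm : (f ^ m) x = x) :
    f.support.card ∣ m := by
  rw [← hf.orderOf]
  exact orderOf_dvd_of_pow_eq_one ((hf.pow_eq_one_iff' hx).2 hm)

theorem Equiv.Perm.card_support_of_cycleType_eq_singleton {α : Type*} [Fintype α]
    [DecidableEq α] {f : Perm α} {k : ℕ} (h : f.cycleType = {k}) : f.support.card = k := by
  rw [← sum_cycleType, h, Multiset.sum_singleton]

section FullCycleType

variable {n : ℕ} {π : Perm (Fin n)}

theorem fullCycleType_eq_iff {k : ℕ} (hk : 2 ≤ k) :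
    fullCycleType π = k ::ₘ Multiset.replicate (n - k) 1 ↔ π.cycleType = {k} := by
  constructor
  · intro h
    have := congrArg (Multiset.filter (2 ≤ ·)) h
    rwa [fullCycleType, Multiset.filter_add, Multiset.filter_eq_self.2
      (fun _ => two_le_of_mem_cycleType), Multiset.filter_cons_of_pos _ hk,
      Multiset.filter_eq_nil.2 (fun a ha => by rw [Multiset.eq_of_mem_replicate ha]; omega),
      Multiset.filter_eq_nil.2 (fun a ha => by rw [Multiset.eq_of_mem_replicate ha]; omega),
      add_zero] at this
  · intro h
    rw [fullCycleType, h, card_support_of_cycleType_eq_singleton h, Multiset.singleton_add]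

end FullCycleType

section OneLine

variable {n : ℕ} (π : Perm (Fin n))

theorem oneline_of_lt {i : ℕ} (h : i - 1 < n) : oneline π i = π ⟨i - 1, h⟩ + 1 := dif_pos h

theorem oneline_val_add_one (i : Fin n) : oneline π (i + 1) = π i + 1 := by
  rw [oneline_of_lt π (by omega)]
  rfl

theorem one_le_oneline {i : ℕ} (h1 : 1 ≤ i) (h2 : i ≤ n) : 1 ≤ oneline π i := by
  rw [oneline_of_lt π (by omega)]
  omega

theorem oneline_le (i : ℕ) : oneline π i ≤ n := by
  unfold oneline
  split_ifs
  · exact Fin.is_lt _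
  · exact Nat.zero_le n

theorem oneline_injOn : Set.InjOn (oneline π) (Set.Icc 1 n) := by
  rintro i ⟨hi1, hin⟩ j ⟨hj1, hjn⟩ h
  rw [oneline_of_lt π (by omega), oneline_of_lt π (by omega), Nat.add_right_cancel_iff,
    Fin.val_inj, π.apply_eq_iff_eq, Fin.mk.injEq] at h
  omega

theorem exists_oneline_eq {v : ℕ} (h1 : 1 ≤ v) (h2 : v ≤ n) :
    ∃ j, 1 ≤ j ∧ j ≤ n ∧ oneline π j = v := by
  refine ⟨π.symm ⟨v - 1, by omega⟩ + 1, by omega, by omega, ?_⟩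
  rw [oneline_val_add_one, apply_symm_apply, Fin.val_mk]
  omega

theorem apply_eq_of_oneline_eq {i v : ℕ} (hi : i < n) (hv : v < n)
    (h : oneline π (i + 1) = v + 1) : π ⟨i, hi⟩ = ⟨v, hv⟩ := by
  rw [oneline_val_add_one π ⟨i, hi⟩] at h
  exact Fin.ext (Nat.add_right_cancel h)

theorem mem_CDes_iff {i : ℕ} : i ∈ CDes π ↔
    (1 ≤ i ∧ i < n ∧ oneline π (i + 1) < oneline π i) ∨
      (i = n ∧ 0 < n ∧ oneline π 1 < oneline π n) := by
  rw [CDes, Finset.mem_filter, Finset.mem_Icc]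
  constructor
  · rintro ⟨⟨hi, hin⟩, h⟩
    obtain hin | rfl := hin.lt_or_eq
    · rw [Nat.mod_eq_of_lt hin] at h
      exact .inl ⟨hi, hin, h⟩
    · rw [Nat.mod_self] at h
      exact .inr ⟨rfl, hi, h⟩
  · rintro (⟨hi, hin, h⟩ | ⟨rfl, hn, h⟩)
    · rw [Nat.mod_eq_of_lt hin]
      exact ⟨⟨hi, hin.le⟩, h⟩
    · rw [Nat.mod_self]
      exact ⟨⟨by omega, le_rfl⟩, h⟩

theorem mem_CDes_of_lt {i : ℕ} (hi : 1 ≤ i) (hin : i < n) :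
    i ∈ CDes π ↔ oneline π (i + 1) < oneline π i := by
  rw [mem_CDes_iff]
  omega

theorem mem_CDes_self (hn : 0 < n) : n ∈ CDes π ↔ oneline π 1 < oneline π n := by
  rw [mem_CDes_iff]
  omega

theorem oneline_lt_succ_of_notMem_CDes {i : ℕ} (hi : 1 ≤ i) (hin : i < n) (h : i ∉ CDes π) :
    oneline π i < oneline π (i + 1) := by
  rw [mem_CDes_of_lt π hi hin, not_lt] at h
  refine h.lt_of_ne fun heq => ?_
  have := oneline_injOn π ⟨hi, hin.le⟩ ⟨by omega, hin⟩ heq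
  omega

theorem oneline_lt_one_of_notMem_CDes (hn : 2 ≤ n) (h : n ∉ CDes π) :
    oneline π n < oneline π 1 := by
  rw [mem_CDes_self π (by omega), not_lt] at h
  refine h.lt_of_ne fun heq => ?_
  have := oneline_injOn π ⟨by omega, le_rfl⟩ ⟨le_rfl, by omega⟩ heq
  omega

end OneLine

section Rigidity

variable {n : ℕ} {π : Perm (Fin n)}

theorem eq_one_of_CDes_eq_singleton (h : CDes π = {n}) : π = 1 := by
  have asc : ∀ i, 1 ≤ i → i < n → oneline π i < oneline π (i + 1) := fun i hi hin =>
    oneline_lt_succ_of_notMem_CDes π hi hin (by rw [h, Finset.mem_singleton]; omega)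
  ext x
  have below := Nat.add_sub_le_of_lt_succ (f := oneline π) (a := 1) (b := x + 1) (by omega)
    fun i hi hix => asc i hi (by omega)
  have above := Nat.add_sub_le_of_lt_succ (f := oneline π) (a := x + 1) (b := n) x.is_lt
    fun i hi hin => asc i (by omega) hin
  have := one_le_oneline π le_rfl (by omega)
  have := oneline_le π n
  rw [oneline_val_add_one] at below above
  rw [Perm.one_apply]
  omega

theorem val_eq_one_of_CDes_eq_pair (hn : 3 ≤ n) (h : CDes π = {1, 2}) {x : Fin n}
    (hx : π x = x) : (x : ℕ) = 1 := by
  have hmem : ∀ i, i ∈ CDes π ↔ i = 1 ∨ i = 2 := by simp [h]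
  have desc : oneline π 2 < oneline π 1 :=
    (mem_CDes_of_lt π le_rfl (by omega)).1 ((hmem 1).2 (by simp))
  have wrap := oneline_lt_one_of_notMem_CDes π (by omega) (by rw [hmem]; omega)
  have fixed : oneline π (x + 1) = x + 1 := by rw [oneline_val_add_one, hx]
  have := one_le_oneline π (i := 2) (by omega) (by omega)
  have := oneline_le π 1
  by_contra hx1
  rcases Nat.eq_zero_or_pos x with hx0 | hx0
  · simp only [hx0, zero_add] at fixed
    omega
  · have chain := Nat.add_sub_le_of_lt_succ (f := oneline π) (a := x + 1) (b := n) x.is_lt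
      fun i hi hin => oneline_lt_succ_of_notMem_CDes π (by omega) hin (by rw [hmem]; omega)
    omega

theorem oneline_prefix_of_CDes_eq (hn : 4 ≤ n) (h : CDes π = insert 1 (Finset.Icc 4 n)) :
    oneline π 1 = 2 ∧ oneline π 2 = 1 ∨
      oneline π 1 = 3 ∧ oneline π 2 = 1 ∧ oneline π 3 = 2 := by
  have hmem : ∀ i, i ∈ CDes π ↔ i = 1 ∨ 4 ≤ i ∧ i ≤ n := by simp [h]
  have desc : oneline π 2 < oneline π 1 :=
    (mem_CDes_of_lt π le_rfl (by omega)).1 ((hmem 1).2 (by simp))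
  have asc : oneline π 2 < oneline π 3 :=
    oneline_lt_succ_of_notMem_CDes π (by omega) (by omega) (by rw [hmem]; omega)
  have wrap : oneline π 1 < oneline π n := (mem_CDes_self π (by omega)).1 ((hmem n).2 (by omega))
  have tail : ∀ j, 4 ≤ j → j ≤ n → oneline π n + (n - j) ≤ oneline π j :=
    fun j hj hjn => Nat.add_sub_le_of_succ_lt hjn fun i hi hin =>
      (mem_CDes_of_lt π (by omega) hin).1 ((hmem i).2 (by omega))
  have := tail 4 le_rfl hn
  have := oneline_le π 4
  have := one_le_oneline π (i := 2) (by omega) (by omega)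
  -- positions `≥ 4` carry values `> oneline π 1`, so the values below it sit at positions 2, 3
  have pos : ∀ v, 1 ≤ v → v < oneline π 1 → oneline π 2 = v ∨ oneline π 3 = v := by
    intro v hv1 hv
    obtain ⟨j, hj1, hjn, hj⟩ := exists_oneline_eq π (v := v) hv1 (by omega)
    obtain rfl | rfl | rfl | hj4 : j = 1 ∨ j = 2 ∨ j = 3 ∨ 4 ≤ j := by omega
    · omega
    · exact .inl hj
    · exact .inr hj
    · have := tail j hj4 hjn
      omega
  have := pos 1 le_rfl (by omega)
  have := pos 2 (by omega)
  omega

theorem card_support_le_three_of_CDes_eq (hn : 4 ≤ n) (h : CDes π = insert 1 (Finset.Icc 4 n))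
    (hπ : π.IsCycle) : π.support.card ≤ 3 := by
  rcases oneline_prefix_of_CDes_eq hn h with ⟨h₁, h₂⟩ | ⟨h₁, h₂, h₃⟩
  · have a₀ := apply_eq_of_oneline_eq π (i := 0) (v := 1) (by omega) (by omega) h₁
    have a₁ := apply_eq_of_oneline_eq π (i := 1) (v := 0) (by omega) (by omega) h₂
    have := hπ.card_support_dvd (x := ⟨0, by omega⟩) (m := 2) (by rw [a₀]; simp)
      (by rw [pow_two, mul_apply, a₀, a₁])
    exact (Nat.le_of_dvd (by omega) this).trans (by omega)
  · have a₀ := apply_eq_of_oneline_eq π (i := 0) (v := 2) (by omega) (by omega) h₁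
    have a₁ := apply_eq_of_oneline_eq π (i := 1) (v := 0) (by omega) (by omega) h₂
    have a₂ := apply_eq_of_oneline_eq π (i := 2) (v := 1) (by omega) (by omega) h₃
    have := hπ.card_support_dvd (x := ⟨0, by omega⟩) (m := 3) (by rw [a₀]; simp)
      (by rw [pow_three, mul_apply, mul_apply, a₀, a₂, a₁])
    exact Nat.le_of_dvd (by omega) this

end Rigidity

section Witnesses

variable {n : ℕ}

theorem oneline_eq_ite {π : Perm (Fin n)} {f : ℕ → ℕ}
    (hf : ∀ p (hp : p < n), (π ⟨p, hp⟩ : ℕ) = f p) (j : ℕ) :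
    oneline π j = if j - 1 < n then f (j - 1) + 1 else 0 := by
  unfold oneline
  split_ifs with h
  · rw [hf]
  · rfl

theorem val_finRotate_apply (p : Fin n) :
    (finRotate n p : ℕ) = if (p : ℕ) + 1 = n then 0 else (p : ℕ) + 1 := by
  rcases n with _ | n
  · exact p.elim0
  · rw [coe_finRotate]
    simp [Fin.ext_iff]

theorem CDes_finRotate (hn : 2 ≤ n) : CDes (finRotate n) = {n - 1} := by
  ext i
  simp only [mem_CDes_iff, oneline_eq_ite (f := fun p => if p + 1 = n then 0 else p + 1)
    (fun p _ => val_finRotate_apply _), Finset.mem_singleton]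
  split_ifs <;> omega

theorem val_cycleRange_inv_apply [NeZero n] (i p : Fin n) :
    ((Fin.cycleRange i)⁻¹ p : ℕ) =
      if (p : ℕ) = 0 then (i : ℕ) else if (p : ℕ) ≤ i then (p : ℕ) - 1 else p := by
  set y := (Fin.cycleRange i)⁻¹ p
  have hy : Fin.cycleRange i y = p := (Fin.cycleRange i).apply_symm_apply p
  rcases le_or_gt y i with hyi | hyi
  · have := Fin.coe_cycleRange_of_le hyi
    rw [hy] at this
    rw [Fin.le_def] at hyi
    split_ifs at this ⊢ with h₁ h₂ <;> simp only [Fin.ext_iff] at * <;> omega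
  · rw [Fin.cycleRange_of_gt hyi] at hy
    rw [Fin.lt_def] at hyi
    rw [hy]
    split_ifs <;> omega

theorem CDes_cycleRange_inv [NeZero n] {i : Fin n} (hi : 1 ≤ (i : ℕ))
    (hin : (i : ℕ) + 1 < n) : CDes (Fin.cycleRange i)⁻¹ = {1, n} := by
  ext j
  simp only [mem_CDes_iff, oneline_eq_ite
    (f := fun p => if p = 0 then (i : ℕ) else if p ≤ i then p - 1 else p)
    (fun p _ => val_cycleRange_inv_apply i _),
    Finset.mem_insert, Finset.mem_singleton]
  split_ifs <;> omega

end Witnesses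

section Zigzag

def zigzag (n p : ℕ) : ℕ :=
  if p = 0 then 0 else if p = 1 then (n + 1) / 2 else if p ≤ n / 2 then n + 1 - p else n - p

variable {n : ℕ}

theorem zigzag_one : zigzag n 1 = (n + 1) / 2 := rfl

theorem zigzag_of_le {p : ℕ} (hp : 2 ≤ p) (hpn : p ≤ n / 2) : zigzag n p = n + 1 - p := by
  rw [zigzag, if_neg (by omega), if_neg (by omega), if_pos hpn]

theorem zigzag_of_gt {p : ℕ} (hp : 2 ≤ p) (hpn : n / 2 < p) : zigzag n p = n - p := by
  rw [zigzag, if_neg (by omega), if_neg (by omega), if_neg (by omega)]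

theorem zigzag_lt {p : ℕ} (hp : p < n) : zigzag n p < n := by
  unfold zigzag
  split_ifs <;> omega

theorem zigzag_injective_fin :
    Function.Injective fun p : Fin n => (⟨zigzag n p, zigzag_lt p.is_lt⟩ : Fin n) := by
  intro p q h
  have hp := p.is_lt
  have hq := q.is_lt
  simp only [Fin.mk.injEq, zigzag] at h
  ext
  split_ifs at h <;> omega

/-- The permutation fixing `0` with one-line notation `[1, ⌈n/2⌉ + 1, n, n - 1, …]`, the entry
`⌈n/2⌉ + 1` being skipped in the decreasing tail. -/
noncomputable def zigzagCycle (n : ℕ) : Perm (Fin n) :=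
  Equiv.ofBijective _ zigzag_injective_fin.bijective_of_finite

theorem val_zigzagCycle_apply (p : Fin n) : (zigzagCycle n p : ℕ) = zigzag n p := rfl

theorem CDes_zigzagCycle (hn : 4 ≤ n) : CDes (zigzagCycle n) = Finset.Icc 3 n := by
  ext j
  simp only [mem_CDes_iff, oneline_eq_ite (f := zigzag n) (fun p _ => val_zigzagCycle_apply _),
    Finset.mem_Icc, zigzag]
  split_ifs <;> omega

theorem support_zigzagCycle (hn : 3 ≤ n) :
    (zigzagCycle n).support = Finset.univ.erase ⟨0, by omega⟩ := by
  ext p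
  have := p.is_lt
  simp only [mem_support, Finset.mem_erase, Finset.mem_univ, and_true, ne_eq, Fin.ext_iff,
    val_zigzagCycle_apply, zigzag]
  split_ifs <;> omega

theorem isCycle_zigzagCycle (hn : 3 ≤ n) : (zigzagCycle n).IsCycle := by
  -- the square of the cycle moves every `m ∈ [2, n/2]` down to `m - 1`
  have down : ∀ m (hm : 1 ≤ m) (hmn : m ≤ n / 2),
      (zigzagCycle n).SameCycle ⟨1, by omega⟩ ⟨m, by omega⟩ := by
    intro m hm hmn
    induction m, hm using Nat.le_induction with
    | base => rfl
    | succ m hm ih =>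
      have hsq : zigzagCycle n (zigzagCycle n ⟨m + 1, by omega⟩) = ⟨m, by omega⟩ := by
        ext
        simp only [val_zigzagCycle_apply]
        rw [zigzag_of_le (by omega) hmn, zigzag_of_gt (by omega) (by omega)]
        omega
      have := ih (by omega)
      rwa [← hsq, sameCycle_apply_right, sameCycle_apply_right] at this
  refine ⟨⟨1, by omega⟩, fun h => ?_, fun y hy => ?_⟩
  · have := congrArg Fin.val h
    rw [val_zigzagCycle_apply, Fin.val_mk, zigzag_one] at this
    omega
  · have hy0 : (y : ℕ) ≠ 0 := fun h => hy (Fin.ext (by rw [val_zigzagCycle_apply, h]; rfl))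
    obtain hlow | hhigh := le_or_gt (y : ℕ) (n / 2)
    · exact down y (by omega) hlow
    by_cases hmid : (y : ℕ) = (n + 1) / 2
    · have : zigzagCycle n ⟨1, by omega⟩ = y :=
        Fin.ext (by rw [val_zigzagCycle_apply, hmid]; rfl)
      rw [← this, sameCycle_apply_right]
    · have : zigzagCycle n ⟨n + 1 - y, by omega⟩ = y := by
        ext
        rw [val_zigzagCycle_apply, Fin.val_mk, zigzag_of_le (by omega) (by omega)]
        omega
      rw [← this, sameCycle_apply_right]
      exact down _ (by omega) (by omega)

theorem cycleType_zigzagCycle (hn : 3 ≤ n) : (zigzagCycle n).cycleType = {n - 1} := by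
  rw [(isCycle_zigzagCycle hn).cycleType, support_zigzagCycle hn,
    Finset.card_erase_of_mem (Finset.mem_univ _), Finset.card_univ, Fintype.card_fin]

end Zigzag

section Shift

variable {n : ℕ}

theorem sh_singleton_of_lt {i : ℕ} (hi : i < n) : sh n {i} = {i + 1} := by
  rw [sh, Finset.image_singleton, Nat.mod_eq_of_lt hi]

theorem sh_one_self (hn : 2 ≤ n) : sh n {1, n} = {1, 2} := by
  rw [sh, Finset.image_insert, Finset.image_singleton, Nat.mod_eq_of_lt (by omega), Nat.mod_self,
    Finset.pair_comm]

theorem sh_Icc_self {a : ℕ} (han : a ≤ n) :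
    sh n (Finset.Icc a n) = insert 1 (Finset.Icc (a + 1) n) := by
  ext j
  simp only [sh, Finset.mem_image, Finset.mem_Icc, Finset.mem_insert]
  constructor
  · rintro ⟨i, ⟨hai, hin⟩, rfl⟩
    obtain hin | rfl := hin.lt_or_eq
    · rw [Nat.mod_eq_of_lt hin]
      omega
    · rw [Nat.mod_self]
      omega
  · rintro (rfl | ⟨hj, hjn⟩)
    · exact ⟨n, ⟨han, le_rfl⟩, by rw [Nat.mod_self]⟩
    · exact ⟨j - 1, ⟨by omega, by omega⟩, by rw [Nat.mod_eq_of_lt (by omega)]; omega⟩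

end Shift

theorem stmt16_general (n k : ℕ) (hk2 : 2 ≤ k) (hkn : k ≤ n)
    (h32 : ¬ (n = 3 ∧ k = 2)) (h43 : ¬ (n = 4 ∧ k = 3)) :
    ¬ ∀ π : Equiv.Perm (Fin n),
        fullCycleType π = k ::ₘ Multiset.replicate (n - k) 1 →
        ∃ π' : Equiv.Perm (Fin n),
          fullCycleType π' = k ::ₘ Multiset.replicate (n - k) 1 ∧
          CDes π' = sh n (CDes π) := by
  intro hclosed
  simp only [fullCycleType_eq_iff hk2] at hclosed
  obtain rfl | hk | ⟨rfl, hn⟩ : k = n ∨ k + 2 ≤ n ∨ n = k + 1 ∧ 5 ≤ n := by omega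
  · obtain ⟨π, hπ, hD⟩ := hclosed _ (cycleType_finRotate_of_le hk2)
    rw [CDes_finRotate hk2, sh_singleton_of_lt (by omega), Nat.sub_add_cancel (by omega)] at hD
    rw [eq_one_of_CDes_eq_singleton hD, cycleType_one] at hπ
    exact Multiset.zero_ne_singleton _ hπ
  · have : NeZero n := ⟨by omega⟩
    have hi : (⟨k - 1, by omega⟩ : Fin n) ≠ 0 :=
      Fin.ne_of_val_ne (by rw [Fin.val_mk, Fin.val_zero]; omega)
    obtain ⟨π, hπ, hD⟩ := hclosed (Fin.cycleRange (⟨k - 1, by omega⟩ : Fin n))⁻¹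
      (by rw [cycleType_inv, Fin.cycleType_cycleRange hi, Nat.sub_add_cancel (by omega)])
    rw [CDes_cycleRange_inv (show 1 ≤ k - 1 by omega) (show k - 1 + 1 < n by omega),
      sh_one_self (by omega)] at hD
    have hsupp : Finset.univ.erase ⟨1, by omega⟩ ⊆ π.support := fun x hx =>
      mem_support.2 fun hfix => (Finset.mem_erase.1 hx).1
        (Fin.ext (val_eq_one_of_CDes_eq_pair (by omega) hD hfix))
    have := Finset.card_le_card hsupp
    rw [Finset.card_erase_of_mem (Finset.mem_univ _), Finset.card_univ, Fintype.card_fin,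
      card_support_of_cycleType_eq_singleton hπ] at this
    omega
  · obtain ⟨π, hπ, hD⟩ := hclosed _ (cycleType_zigzagCycle (by omega))
    rw [CDes_zigzagCycle (by omega), sh_Icc_self (by omega)] at hD
    have := card_support_le_three_of_CDes_eq (by omega) hD
      (card_cycleType_eq_one.1 (by rw [hπ]; rfl))
    rw [card_support_of_cycleType_eq_singleton hπ] at this
    omega

/-- For `n ≥ 2` and `2 ≤ k ≤ n` with `(n,k) ≠ (3,2)` and `(n,k) ≠ (4,3)`,
Cellini's cyclic descent map on the conjugacy class of `k`-cycles in `S_n` is not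
closed under cyclic rotation. -/
theorem stmt16 (n k : ℕ) (hn : 2 ≤ n) (hk2 : 2 ≤ k) (hkn : k ≤ n)
    (h32 : ¬ (n = 3 ∧ k = 2)) (h43 : ¬ (n = 4 ∧ k = 3)) :
    ¬ ∀ π : Equiv.Perm (Fin n),
        fullCycleType π = k ::ₘ Multiset.replicate (n - k) 1 →
        ∃ π' : Equiv.Perm (Fin n),
          fullCycleType π' = k ::ₘ Multiset.replicate (n - k) 1 ∧
          CDes π' = sh n (CDes π) :=
  stmt16_general n k hk2 hkn h32 h43
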